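/- arXiv:2508.03824 — 3 statements merged into one kernel-verified Lean document; each statement's English description precedes it below -/
import Mathlib

section
/- Let n and N be positive natural numbers and c ∈ ℝⁿ. Let M₁, …, M_N be invertible n×n real matrices with zⁱ = −Mᵢ⁻¹ c for each i, let M̌ be an invertible n×n real matrix with ž = −M̌⁻¹ c, and for each i let Eᵢ be an mᵢ×n real matrix each of whose rows is a standard basis row vector of ℝⁿ, with distinct rows (a coordinate-selection matrix). Then (1/2) Σᵢ₌₁^N ‖Eᵢ (ž − zⁱ)‖₂² ≤ (1/2) Σᵢ₌₁^N ( ‖M̌⁻¹‖ · ‖M̌ − Mᵢ‖ · ‖zⁱ‖₂ )², where ‖·‖ on matrices denotes the operator norm induced by the Euclidean norm. -/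
open scoped Matrix.Norms.L2Operator
open Matrix

lemma sel_norm_le {p n : ℕ} (A : Matrix (Fin p) (Fin n) ℝ)
    (sel : Fin p → Fin n) (hinj : Function.Injective sel)
    (hA : ∀ r j, A r j = if j = sel r then 1 else 0)
    (v : EuclideanSpace ℝ (Fin n)) :
    ‖Matrix.toEuclideanLin A v‖ ≤ ‖v‖ := by
  have hentry : ∀ r, (Matrix.toEuclideanLin A v) r = v (sel r) := by
    intro r
    simp only [Matrix.toEuclideanLin_apply]
    show (A *ᵥ (WithLp.equiv 2 (Fin n → ℝ)) v) r = v (sel r)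
    simp only [Matrix.mulVec, dotProduct, hA]
    rw [Finset.sum_eq_single (sel r)]
    · simp
    · intro b _ hb; simp [hb]
    · simp
  have h1 : ‖Matrix.toEuclideanLin A v‖ ^ 2 ≤ ‖v‖ ^ 2 := by
    rw [EuclideanSpace.norm_eq, EuclideanSpace.norm_eq,
      Real.sq_sqrt (by positivity), Real.sq_sqrt (by positivity)]
    simp only [hentry]
    calc ∑ r : Fin p, ‖v (sel r)‖ ^ 2
        = ∑ j ∈ Finset.image sel Finset.univ, ‖v j‖ ^ 2 := by
          rw [Finset.sum_image (fun a _ b _ h => hinj h)]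
      _ ≤ ∑ j : Fin n, ‖v j‖ ^ 2 :=
          Finset.sum_le_sum_of_subset_of_nonneg (Finset.subset_univ _)
            (fun j _ _ => by positivity)
  nlinarith [norm_nonneg (Matrix.toEuclideanLin A v), norm_nonneg v]

/-- With `zⁱ = −Mᵢ⁻¹ c`, `ž = −M̌⁻¹ c`, and coordinate-selection matrices `Eᵢ`
(each row a standard basis row vector, rows distinct), we have
`(1/2) Σᵢ ‖Eᵢ (ž − zⁱ)‖² ≤ (1/2) Σᵢ (‖M̌⁻¹‖ ‖M̌ − Mᵢ‖ ‖zⁱ‖)²`. -/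
theorem stmt2 (n N : ℕ) (hn : 0 < n) (hN : 0 < N)
    (M : Fin N → Matrix (Fin n) (Fin n) ℝ) (hM : ∀ i, IsUnit (M i))
    (Mc : Matrix (Fin n) (Fin n) ℝ) (hMc : IsUnit Mc)
    (c : EuclideanSpace ℝ (Fin n))
    (z : Fin N → EuclideanSpace ℝ (Fin n))
    (hz : ∀ i, z i = -(Matrix.toEuclideanCLM (𝕜 := ℝ) (M i)⁻¹ c))
    (zc : EuclideanSpace ℝ (Fin n))
    (hzc : zc = -(Matrix.toEuclideanCLM (𝕜 := ℝ) Mc⁻¹ c))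
    (m : Fin N → ℕ) (E : ∀ i, Matrix (Fin (m i)) (Fin n) ℝ)
    (hE : ∀ i, ∃ sel : Fin (m i) → Fin n, Function.Injective sel ∧
      ∀ r j, E i r j = if j = sel r then 1 else 0) :
    (1 / 2 : ℝ) * ∑ i, ‖Matrix.toEuclideanLin (E i) (zc - z i)‖ ^ 2 ≤
      (1 / 2 : ℝ) * ∑ i, (‖Mc⁻¹‖ * ‖Mc - M i‖ * ‖z i‖) ^ 2 := by
  have key : ∀ i, ‖Matrix.toEuclideanLin (E i) (zc - z i)‖ ≤
      ‖Mc⁻¹‖ * ‖Mc - M i‖ * ‖z i‖ := by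
    intro i
    obtain ⟨sel, hinj, hA⟩ := hE i
    have h1 : ‖Matrix.toEuclideanLin (E i) (zc - z i)‖ ≤ ‖zc - z i‖ :=
      sel_norm_le (E i) sel hinj hA _
    have hu : Mc⁻¹ * (Mc - M i) * (M i)⁻¹ = (M i)⁻¹ - Mc⁻¹ := by
      have h1 : Mc⁻¹ * Mc = 1 :=
        Matrix.nonsing_inv_mul _ ((Matrix.isUnit_iff_isUnit_det _).mp hMc)
      have h2 : (Mc - M i) * (M i)⁻¹ = Mc * (M i)⁻¹ - 1 := by
        rw [sub_mul, Matrix.mul_nonsing_inv _ ((Matrix.isUnit_iff_isUnit_det _).mp (hM i))]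
      rw [mul_assoc, h2, mul_sub, mul_one, ← mul_assoc, h1, one_mul]
    have hcomp : Matrix.toEuclideanCLM (𝕜 := ℝ) (Mc⁻¹ * (Mc - M i)) (z i)
        = Matrix.toEuclideanCLM (𝕜 := ℝ) Mc⁻¹ c
          - Matrix.toEuclideanCLM (𝕜 := ℝ) (M i)⁻¹ c := by
      rw [hz, map_neg, ← ContinuousLinearMap.mul_apply, ← _root_.map_mul, hu, map_sub,
        ContinuousLinearMap.sub_apply]
      abel
    have hid : zc - z i = -(Matrix.toEuclideanCLM (𝕜 := ℝ) (Mc⁻¹ * (Mc - M i)) (z i)) := by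
      rw [hcomp, hzc, hz]; abel
    have h2 : ‖zc - z i‖ ≤ ‖Mc⁻¹ * (Mc - M i)‖ * ‖z i‖ := by
      rw [hid, norm_neg]
      calc ‖Matrix.toEuclideanCLM (𝕜 := ℝ) (Mc⁻¹ * (Mc - M i)) (z i)‖
          ≤ ‖Matrix.toEuclideanCLM (𝕜 := ℝ) (Mc⁻¹ * (Mc - M i))‖ * ‖z i‖ :=
            ContinuousLinearMap.le_opNorm _ _
        _ = ‖Mc⁻¹ * (Mc - M i)‖ * ‖z i‖ := by
            rw [← Matrix.cstar_norm_def]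
    have h3 : ‖Mc⁻¹ * (Mc - M i)‖ * ‖z i‖ ≤ ‖Mc⁻¹‖ * ‖Mc - M i‖ * ‖z i‖ :=
      mul_le_mul_of_nonneg_right (norm_mul_le _ _) (norm_nonneg _)
    exact h1.trans (h2.trans h3)
  have hsum : ∑ i, ‖Matrix.toEuclideanLin (E i) (zc - z i)‖ ^ 2 ≤
      ∑ i, (‖Mc⁻¹‖ * ‖Mc - M i‖ * ‖z i‖) ^ 2 :=
    Finset.sum_le_sum fun i _ =>
      pow_le_pow_left₀ (norm_nonneg _) (key i) 2
  linarith
end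

section
/- Let n and N be positive natural numbers, let M₁, …, M_N be invertible n×n real matrices, let c ∈ ℝⁿ, and suppose (1/N) Σᵢ₌₁^N Mᵢ⁻¹ is invertible, with inverse M̌ ≡ ((1/N) Σᵢ₌₁^N Mᵢ⁻¹)⁻¹. Then for every n×n real matrix Y, (1/2) Σᵢ₌₁^N ‖Mᵢ⁻¹ c − Y c‖₂² ≥ (1/2) Σᵢ₌₁^N ( ‖(Mᵢ − M̌) Mᵢ⁻¹ c‖₂ / ‖M̌‖ )², where ‖M̌‖ is the operator norm induced by the Euclidean norm (equal to σ_max(M̌)). -/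
open scoped Matrix.Norms.L2Operator

/-- Lower bound: with `M̌ = ((1/N) Σᵢ Mᵢ⁻¹)⁻¹`, for every matrix `Y`,
`(1/2) Σᵢ ‖Mᵢ⁻¹ c − Y c‖² ≥ (1/2) Σᵢ (‖(Mᵢ − M̌) Mᵢ⁻¹ c‖ / ‖M̌‖)²`,
where `‖M̌‖` is the operator norm induced by the Euclidean norm. -/
theorem stmt5 (n N : ℕ) (hn : 0 < n) (hN : 0 < N)
    (M : Fin N → Matrix (Fin n) (Fin n) ℝ) (hM : ∀ i, IsUnit (M i))
    (c : EuclideanSpace ℝ (Fin n))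
    (havg : IsUnit ((N : ℝ)⁻¹ • ∑ i, (M i)⁻¹))
    (Mc : Matrix (Fin n) (Fin n) ℝ)
    (hMcdef : Mc = ((N : ℝ)⁻¹ • ∑ i, (M i)⁻¹)⁻¹) :
    ∀ Y : Matrix (Fin n) (Fin n) ℝ,
      (1 / 2 : ℝ) * ∑ i, ‖Matrix.toEuclideanCLM (𝕜 := ℝ) (M i)⁻¹ c -
            Matrix.toEuclideanCLM (𝕜 := ℝ) Y c‖ ^ 2 ≥
        (1 / 2 : ℝ) * ∑ i,
          (‖Matrix.toEuclideanCLM (𝕜 := ℝ) (M i - Mc)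
              (Matrix.toEuclideanCLM (𝕜 := ℝ) (M i)⁻¹ c)‖ / ‖Mc‖) ^ 2 := by
  intro Y
  haveI : Nonempty (Fin n) := ⟨⟨0, hn⟩⟩
  set T := Matrix.toEuclideanCLM (𝕜 := ℝ) (n := Fin n) with hT
  set B : Matrix (Fin n) (Fin n) ℝ := (N : ℝ)⁻¹ • ∑ i, (M i)⁻¹ with hB
  set x : Fin N → EuclideanSpace ℝ (Fin n) := fun i => T (M i)⁻¹ c with hx
  set xb : EuclideanSpace ℝ (Fin n) := T B c with hxb
  set y : EuclideanSpace ℝ (Fin n) := T Y c with hy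
  -- Mc is a unit, so its norm is positive
  have hMcB : Mc * B = 1 := by
    rw [hMcdef]
    exact Matrix.nonsing_inv_mul B ((Matrix.isUnit_iff_isUnit_det B).mp havg)
  have hMc_ne : Mc ≠ 0 := by
    intro h
    have : (0 : Matrix (Fin n) (Fin n) ℝ) = 1 := by rw [← hMcB, h, zero_mul]
    exact one_ne_zero this.symm
  have hMc_pos : 0 < ‖Mc‖ := norm_pos_iff.mpr hMc_ne
  -- mean property: xb is the average of the x i
  have hxb_avg : (N : ℝ) • xb = ∑ i, x i := by
    rw [hxb, hB, map_smul, map_sum]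
    simp only [ContinuousLinearMap.smul_apply, ContinuousLinearMap.sum_apply]
    rw [smul_smul, mul_inv_cancel₀ (by exact_mod_cast hN.ne' : (N : ℝ) ≠ 0), one_smul]
  -- Step 1: per index, ‖T (M i - Mc) (x i)‖ ≤ ‖Mc‖ * ‖x i - xb‖
  have step1 : ∀ i, ‖T (M i - Mc) (x i)‖ ≤ ‖Mc‖ * ‖x i - xb‖ := by
    intro i
    have h1 : T (M i) (x i) = c := by
      rw [hx]
      have : T (M i) (T (M i)⁻¹ c) = T ((M i) * (M i)⁻¹) c := by
        rw [map_mul]; rfl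
      rw [this, Matrix.mul_nonsing_inv _ ((Matrix.isUnit_iff_isUnit_det _).mp (hM i)),
        map_one]; rfl
    have h2 : T Mc xb = c := by
      rw [hxb]
      have : T Mc (T B c) = T (Mc * B) c := by rw [map_mul]; rfl
      rw [this, hMcB, map_one]; rfl
    have h3 : T (M i - Mc) (x i) = T Mc (xb - x i) := by
      rw [map_sub, ContinuousLinearMap.sub_apply, h1, map_sub, h2]
    rw [h3]
    calc ‖T Mc (xb - x i)‖ ≤ ‖T Mc‖ * ‖xb - x i‖ := (T Mc).le_opNorm _
      _ = ‖Mc‖ * ‖x i - xb‖ := by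
          rw [← Matrix.cstar_norm_def, norm_sub_rev]
  have step1' : ∀ i, (‖T (M i - Mc) (x i)‖ / ‖Mc‖) ^ 2 ≤ ‖x i - xb‖ ^ 2 := by
    intro i
    have h : ‖T (M i - Mc) (x i)‖ / ‖Mc‖ ≤ ‖x i - xb‖ :=
      (div_le_iff₀ hMc_pos).mpr ((step1 i).trans (le_of_eq (mul_comm _ _)))
    exact pow_le_pow_left₀ (div_nonneg (norm_nonneg _) hMc_pos.le) h 2
  -- Step 2: the mean minimizes the sum of squared distances
  have key : ∑ i, ‖x i - xb‖ ^ 2 ≤ ∑ i, ‖x i - y‖ ^ 2 := by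
    have expand : ∀ i, ‖x i - y‖ ^ 2 =
        ‖x i - xb‖ ^ 2 + 2 * inner ℝ (x i - xb) (xb - y) + ‖xb - y‖ ^ 2 := by
      intro i
      have : x i - y = (x i - xb) + (xb - y) := by abel
      rw [this, @norm_add_sq_real]
    rw [Finset.sum_congr rfl fun i _ => expand i]
    have hcross : ∑ i, inner ℝ (x i - xb) (xb - y) = (0 : ℝ) := by
      rw [← sum_inner]
      have : ∑ i, (x i - xb) = 0 := by
        rw [Finset.sum_sub_distrib, ← hxb_avg, Finset.sum_const, Finset.card_univ,
          Fintype.card_fin, sub_eq_zero]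
        simp [← Nat.cast_smul_eq_nsmul ℝ]
      rw [this, inner_zero_left]
    have : ∑ i, (‖x i - xb‖ ^ 2 + 2 * inner ℝ (x i - xb) (xb - y) + ‖xb - y‖ ^ 2)
        = ∑ i, ‖x i - xb‖ ^ 2 + 2 * ∑ i, (inner ℝ (x i - xb) (xb - y) : ℝ)
          + N * ‖xb - y‖ ^ 2 := by
      rw [Finset.sum_add_distrib, Finset.sum_add_distrib, ← Finset.mul_sum,
        Finset.sum_const, Finset.card_univ, Fintype.card_fin, nsmul_eq_mul]
    rw [this, hcross]
    nlinarith [sq_nonneg ‖xb - y‖, (by exact_mod_cast hN : (0:ℝ) < N)]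
  have hsum : ∑ i, (‖T (M i - Mc) (x i)‖ / ‖Mc‖) ^ 2 ≤ ∑ i, ‖x i - y‖ ^ 2 :=
    le_trans (Finset.sum_le_sum fun i _ => step1' i) key
  have : (1 / 2 : ℝ) * ∑ i, (‖T (M i - Mc) (x i)‖ / ‖Mc‖) ^ 2
      ≤ (1 / 2 : ℝ) * ∑ i, ‖x i - y‖ ^ 2 := by linarith
  simpa [hx, hy, hT] using this
end

section
/- There exist symmetric positive definite 2×2 real matrices A₁ and A₂ and vectors b, y ∈ ℝ² such that ‖((A₁ + A₂)/2)⁻¹ b − y‖₂² > (1/2) ‖A₁⁻¹ b − y‖₂² + (1/2) ‖A₂⁻¹ b − y‖₂². In particular, for such b and y, the function A ↦ ‖A⁻¹ b − y‖₂², defined on the convex set of symmetric positive definite 2×2 real matrices, is not convex. -/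
open scoped Matrix.Norms.L2Operator

/-- There exist symmetric positive definite 2×2 real matrices `A₁, A₂` and vectors
`b, y ∈ ℝ²` witnessing a midpoint-convexity violation of `A ↦ ‖A⁻¹ b − y‖²`:
`‖((A₁ + A₂)/2)⁻¹ b − y‖² > (1/2) ‖A₁⁻¹ b − y‖² + (1/2) ‖A₂⁻¹ b − y‖²`. -/
theorem stmt6 :
    ∃ (A₁ A₂ : Matrix (Fin 2) (Fin 2) ℝ) (b y : EuclideanSpace ℝ (Fin 2)),
      A₁.IsSymm ∧ A₁.PosDef ∧ A₂.IsSymm ∧ A₂.PosDef ∧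
      ‖Matrix.toEuclideanCLM (𝕜 := ℝ) (((2 : ℝ)⁻¹ • (A₁ + A₂))⁻¹) b - y‖ ^ 2 >
        (1 / 2 : ℝ) * ‖Matrix.toEuclideanCLM (𝕜 := ℝ) A₁⁻¹ b - y‖ ^ 2 +
        (1 / 2 : ℝ) * ‖Matrix.toEuclideanCLM (𝕜 := ℝ) A₂⁻¹ b - y‖ ^ 2 := by
  refine ⟨1, Matrix.diagonal ![3,3], (WithLp.equiv 2 _).symm ![1,0],
    (WithLp.equiv 2 _).symm ![1,0], ?_, ?_, ?_, ?_, ?_⟩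
  · simp [Matrix.IsSymm]
  · exact Matrix.PosDef.one
  · exact (Matrix.isSymm_diagonal _)
  · rw [Matrix.posDef_diagonal_iff]
    intro i; fin_cases i <;> norm_num
  · have h1 : ((2:ℝ)⁻¹ • ((1 : Matrix (Fin 2) (Fin 2) ℝ) + Matrix.diagonal ![3,3]))⁻¹
        = !![1/2,0;0,1/2] := by
      apply Matrix.inv_eq_right_inv
      ext i j
      fin_cases i <;> fin_cases j <;>
        simp [Matrix.mul_apply, Fin.sum_univ_two, Matrix.diagonal] <;> norm_num
    have h2 : ((1 : Matrix (Fin 2) (Fin 2) ℝ))⁻¹ = 1 := inv_one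
    have h3 : (Matrix.diagonal ![3,3] : Matrix (Fin 2) (Fin 2) ℝ)⁻¹ = !![1/3,0;0,1/3] := by
      apply Matrix.inv_eq_right_inv
      ext i j
      fin_cases i <;> fin_cases j <;>
        simp [Matrix.mul_apply, Fin.sum_univ_two, Matrix.diagonal] <;> norm_num
    rw [h1, h2, h3]
    rw [WithLp.equiv_symm_apply, Matrix.toEuclideanCLM_toLp, Matrix.toEuclideanCLM_toLp,
      Matrix.toEuclideanCLM_toLp, ← WithLp.equiv_symm_apply]
    have hn : ∀ v : Fin 2 → ℝ,
        ‖(WithLp.equiv 2 (Fin 2 → ℝ)).symm v - (WithLp.equiv 2 _).symm ![1,0]‖^2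
          = (v 0 - 1)^2 + (v 1)^2 := by
      intro v
      rw [EuclideanSpace.norm_eq, Real.sq_sqrt (by positivity)]
      simp [PiLp.sub_apply, Fin.sum_univ_two, sq_abs]
    rw [hn, hn, hn]
    norm_num [Matrix.mulVec, dotProduct, Fin.sum_univ_two]
end
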